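/- arXiv:2003.11470 — 2 statements merged into one kernel-verified Lean document; each statement's English description precedes it below -/
import Mathlib

section
/- Let X₁,…,X_K be i.i.d. nonnegative real random variables with finite first and second moments. Then for any τ > 0, Pr[(1/K)∑_{k=1}^K X_k < (1−τ)E[X]] ≤ exp(−K τ² E[X]² / (2 E[X²])). -/
/-!
Chernoff's method applied to the lower tail: for `t ≥ 0`,
`P[∑ X_k ≤ a] ≤ e^{ta} E[e^{-tX}]^K`. For nonnegative `X` the bound
`e^{-u} ≤ 1 - u + u²/2` (`u ≥ 0`) gives `E[e^{-tX}] ≤ exp(-t E[X] + t² E[X²]/2)`, so only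
the first two moments enter, and `t = τ E[X] / E[X²]` optimises the resulting quadratic exponent.
-/

open MeasureTheory ProbabilityTheory Real

theorem Real.exp_neg_le_one_sub_add_sq_div_two {u : ℝ} (hu : 0 ≤ u) :
    exp (-u) ≤ 1 - u + u ^ 2 / 2 := by
  have hpos : 0 < 1 + u + u ^ 2 / 2 := by positivity
  calc exp (-u) = (exp u)⁻¹ := exp_neg u
    _ ≤ (1 + u + u ^ 2 / 2)⁻¹ := inv_anti₀ hpos (quadratic_le_exp_of_nonneg hu)
    _ ≤ 1 - u + u ^ 2 / 2 := by
      -- `(1 - u + u²/2)(1 + u + u²/2) = 1 + u⁴/4`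
      rw [inv_le_iff_one_le_mul₀' hpos]
      nlinarith [pow_nonneg hu 4]

namespace ProbabilityTheory

variable {Ω : Type*} [MeasurableSpace Ω] {P : Measure Ω}

theorem integrable_exp_neg_mul_of_nonneg [IsFiniteMeasure P] {Y : Ω → ℝ}
    (hY : AEMeasurable Y P) (hnonneg : ∀ᵐ ω ∂P, 0 ≤ Y ω) {t : ℝ} (ht : 0 ≤ t) :
    Integrable (fun ω => exp (-t * Y ω)) P := by
  refine Integrable.of_bound (hY.const_mul (-t)).exp.aestronglyMeasurable 1 ?_
  filter_upwards [hnonneg] with ω hω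
  rw [norm_of_nonneg (exp_nonneg _), exp_le_one_iff]
  nlinarith

theorem mgf_neg_le_exp_of_nonneg [IsProbabilityMeasure P] {Y : Ω → ℝ}
    (hnonneg : ∀ᵐ ω ∂P, 0 ≤ Y ω) (h1 : Integrable Y P)
    (h2 : Integrable (fun ω => Y ω ^ 2) P) {t : ℝ} (ht : 0 ≤ t) :
    mgf Y P (-t) ≤ exp (-t * ∫ ω, Y ω ∂P + t ^ 2 / 2 * ∫ ω, Y ω ^ 2 ∂P) := by
  have hlin : Integrable (fun ω => 1 - t * Y ω) P := (integrable_const 1).sub (h1.const_mul t)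
  have hquad : Integrable (fun ω => t ^ 2 / 2 * Y ω ^ 2) P := h2.const_mul _
  calc mgf Y P (-t) ≤ ∫ ω, (1 - t * Y ω + t ^ 2 / 2 * Y ω ^ 2) ∂P := by
        refine integral_mono_ae
          (integrable_exp_neg_mul_of_nonneg h1.aemeasurable hnonneg ht) (hlin.add hquad) ?_
        filter_upwards [hnonneg] with ω hω
        have := exp_neg_le_one_sub_add_sq_div_two (mul_nonneg ht hω)
        rw [neg_mul]
        linarith [mul_pow t (Y ω) 2]
    _ = (-t * ∫ ω, Y ω ∂P + t ^ 2 / 2 * ∫ ω, Y ω ^ 2 ∂P) + 1 := by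
        rw [integral_add hlin hquad, integral_sub (integrable_const 1) (h1.const_mul t),
          integral_const_mul, integral_const_mul]
        simp only [integral_const, probReal_univ, smul_eq_mul, mul_one]
        ring
    _ ≤ _ := add_one_le_exp _

theorem iIndepFun.mgf_sum_eq_pow {ι : Type*} [Fintype ι] {X : ι → Ω → ℝ}
    (hindep : iIndepFun X P) (hmeas : ∀ i, Measurable (X i)) {Y : Ω → ℝ}
    (hident : ∀ i, IdentDistrib (X i) Y P P) (t : ℝ) :
    mgf (∑ i, X i) P t = mgf Y P t ^ Fintype.card ι := by
  have hmgf (i : ι) : mgf (X i) P t = mgf Y P t :=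
    ((hident i).comp (measurable_const_mul t).exp).integral_eq
  simp only [hindep.mgf_sum hmeas, hmgf, Finset.prod_const, Finset.card_univ]

theorem measureReal_sum_le_le_exp_of_iid [IsProbabilityMeasure P] {ι : Type*} [Fintype ι]
    {X : ι → Ω → ℝ} (hmeas : ∀ i, Measurable (X i))
    (hnonneg : ∀ i, ∀ᵐ ω ∂P, 0 ≤ X i ω)
    (hindep : iIndepFun X P) (i₀ : ι) (hident : ∀ i, IdentDistrib (X i) (X i₀) P P)
    (h1 : Integrable (X i₀) P) (h2 : Integrable (fun ω => X i₀ ω ^ 2) P)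
    {t : ℝ} (ht : 0 ≤ t) (a : ℝ) :
    P.real {ω | ∑ i, X i ω ≤ a} ≤
      exp (t * a + Fintype.card ι *
        (-t * ∫ ω, X i₀ ω ∂P + t ^ 2 / 2 * ∫ ω, X i₀ ω ^ 2 ∂P)) := by
  have hsum_nonneg : ∀ᵐ ω ∂P, 0 ≤ (∑ i, X i) ω := by
    filter_upwards [ae_all_iff.2 hnonneg] with ω hω
    rw [Finset.sum_apply]
    exact Finset.sum_nonneg fun i _ => hω i
  have hint := integrable_exp_neg_mul_of_nonneg (by fun_prop) hsum_nonneg ht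
  calc P.real {ω | ∑ i, X i ω ≤ a} ≤ exp (- -t * a) * mgf (∑ i, X i) P (-t) := by
        simpa only [Finset.sum_apply] using
          measure_le_le_exp_mul_mgf (X := ∑ i, X i) a (neg_nonpos.2 ht) hint
    _ ≤ exp (t * a) * exp (-t * ∫ ω, X i₀ ω ∂P + t ^ 2 / 2 * ∫ ω, X i₀ ω ^ 2 ∂P) ^
          Fintype.card ι := by
        rw [hindep.mgf_sum_eq_pow hmeas hident, neg_neg]
        gcongr
        · exact mgf_nonneg
        · exact mgf_neg_le_exp_of_nonneg (hnonneg i₀) h1 h2 ht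
    _ = _ := by rw [← exp_nat_mul, ← exp_add]

end ProbabilityTheory

/-- Maurer's concentration inequality: for i.i.d. nonnegative real random variables
`X₁,…,X_K` with finite first and second moments, for any `τ > 0`,
`Pr[(1/K)∑ X_k < (1−τ)E[X]] ≤ exp(−K τ² E[X]² / (2 E[X²]))`. -/
theorem maurer_tail_bound {Ω : Type*} [MeasureSpace Ω] (P : Measure Ω) [IsProbabilityMeasure P]
    (K : ℕ) (hK : 1 ≤ K) (X : Fin K → Ω → ℝ)
    (hmeas : ∀ k, Measurable (X k))
    (hnonneg : ∀ k, ∀ᵐ ω ∂P, 0 ≤ X k ω)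
    (hindep : iIndepFun X P)
    (hident : ∀ k, IdentDistrib (X k) (X ⟨0, hK⟩) P P)
    (hL1 : Integrable (X ⟨0, hK⟩) P) (hL2 : Integrable (fun ω => (X ⟨0, hK⟩ ω) ^ 2) P)
    (τ : ℝ) (hτ : 0 < τ) :
    (P {ω | (1 / K : ℝ) * ∑ k, X k ω < (1 - τ) * ∫ ω, X ⟨0, hK⟩ ω ∂P}).toReal ≤
      Real.exp (-(K * τ ^ 2 * (∫ ω, X ⟨0, hK⟩ ω ∂P) ^ 2) / (2 * ∫ ω, (X ⟨0, hK⟩ ω) ^ 2 ∂P)) := by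
  set μ := ∫ ω, X ⟨0, hK⟩ ω ∂P
  set m₂ := ∫ ω, X ⟨0, hK⟩ ω ^ 2 ∂P
  have hK₀ : (0 : ℝ) < K := by exact_mod_cast hK
  have hμ : 0 ≤ μ := integral_nonneg_of_ae (hnonneg _)
  have hm₂ : 0 ≤ m₂ := integral_nonneg fun ω => sq_nonneg _
  have hevent : {ω | (1 / K : ℝ) * ∑ k, X k ω < (1 - τ) * μ} ⊆
      {ω | ∑ k, X k ω ≤ K * ((1 - τ) * μ)} := fun ω hω => by
    simp only [Set.mem_ofPred_eq, one_div, inv_mul_lt_iff₀ hK₀] at hω ⊢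
    exact hω.le
  calc P.real {ω | (1 / K : ℝ) * ∑ k, X k ω < (1 - τ) * μ}
      ≤ P.real {ω | ∑ k, X k ω ≤ K * ((1 - τ) * μ)} := measureReal_mono hevent
    _ ≤ exp (τ * μ / m₂ * (K * ((1 - τ) * μ)) +
          K * (-(τ * μ / m₂) * μ + (τ * μ / m₂) ^ 2 / 2 * m₂)) := by
        simpa only [Fintype.card_fin] using measureReal_sum_le_le_exp_of_iid hmeas hnonneg
          hindep ⟨0, hK⟩ hident hL1 hL2 (by positivity) _
    _ = exp (-(K * τ ^ 2 * μ ^ 2) / (2 * m₂)) := by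
        -- also holds for `m₂ = 0`, where both exponents are `0`
        congr 1
        rcases hm₂.eq_or_lt with h | h
        · simp [← h]
        · field_simp
          ring
end

section
/- Let ρ be a density matrix on ℂ^{2^n} with ρ ≤ (1+ε)2^{−n}I for some 0 ≤ ε ≤ 1, and let {Λ_y = α_y|φ_y⟩⟨φ_y|}_y be a rank-one POVM with α_y ≥ 0, unit vectors |φ_y⟩, and ∑_y α_y |φ_y⟩⟨φ_y| = I. Then ∑_y α_y = 2^n, the outcome distribution p(y) = α_y⟨φ_y|ρ|φ_y⟩ is a probability distribution, and its Shannon entropy satisfies H(p) ≥ n − log₂(1+ε) ≥ n − 2ε. -/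
/-!
Taking the trace of `∑ α_y |φ_y⟩⟨φ_y| = I`, alone and after multiplying by `ρ`, gives
`∑ α_y = 2ⁿ` and `∑ p(y) = tr ρ = 1`; evaluating it at `φ_y` gives `α_y ≤ 1`. Hence
every outcome has `p(y) ≤ ⟨φ_y|ρ|φ_y⟩ ≤ (1+ε)2⁻ⁿ`, and a probability vector whose
entries are at most `c` has Shannon entropy at least `-log₂ c`.
-/

open Matrix
open scoped ComplexOrder

namespace Matrix

variable {m R : Type*} [Fintype m] [CommSemiring R]

theorem trace_mul_vecMulVec (A : Matrix m m R) (u v : m → R) :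
    (A * vecMulVec u v).trace = v ⬝ᵥ A *ᵥ u := by
  rw [mul_vecMulVec, trace_vecMulVec, dotProduct_comm]

theorem dotProduct_vecMulVec_mulVec (x u v w : m → R) :
    x ⬝ᵥ vecMulVec u v *ᵥ w = (x ⬝ᵥ u) * (v ⬝ᵥ w) := by
  rw [vecMulVec_mulVec, dotProduct_smul, op_smul_eq_mul]

end Matrix

namespace Matrix.PosSemidef

variable {m : Type*} [Fintype m]

theorem re_dotProduct_mulVec_nonneg {A : Matrix m m ℂ} (hA : A.PosSemidef) (x : m → ℂ) :
    0 ≤ (star x ⬝ᵥ A *ᵥ x).re :=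
  (Complex.nonneg_iff.mp (hA.dotProduct_mulVec_nonneg x)).1

theorem re_dotProduct_mulVec_le [DecidableEq m] {A : Matrix m m ℂ} {c : ℝ}
    (hA : ((c : ℂ) • (1 : Matrix m m ℂ) - A).PosSemidef) {x : m → ℂ}
    (hx : star x ⬝ᵥ x = 1) :
    (star x ⬝ᵥ A *ᵥ x).re ≤ c := by
  have h := hA.re_dotProduct_mulVec_nonneg x
  rw [sub_mulVec, dotProduct_sub, smul_mulVec, one_mulVec, dotProduct_smul, hx, smul_eq_mul,
    mul_one, Complex.sub_re, Complex.ofReal_re] at h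
  linarith

end Matrix.PosSemidef

section RankOneResolution

variable {m Y : Type*} [Fintype m] [DecidableEq m] [Fintype Y]
  {α : Y → ℝ} {φ : Y → m → ℂ}

theorem sum_weight_mul_dotProduct_mulVec_eq_trace (A : Matrix m m ℂ)
    (hcomplete : ∑ y, (α y : ℂ) • vecMulVec (φ y) (star (φ y)) = 1) :
    ∑ y, (α y : ℂ) * (star (φ y) ⬝ᵥ A *ᵥ φ y) = A.trace := by
  have h := congrArg (fun B => (A * B).trace) hcomplete
  simpa only [Finset.mul_sum, Matrix.mul_smul, trace_sum, trace_smul, trace_mul_vecMulVec,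
    smul_eq_mul, mul_one] using h

theorem sum_weight_eq_card (hφ : ∀ y, star (φ y) ⬝ᵥ φ y = 1)
    (hcomplete : ∑ y, (α y : ℂ) • vecMulVec (φ y) (star (φ y)) = 1) :
    ∑ y, α y = Fintype.card m := by
  have h := sum_weight_mul_dotProduct_mulVec_eq_trace 1 hcomplete
  simp only [one_mulVec, hφ, mul_one, trace_one] at h
  exact_mod_cast h

theorem weight_le_one (hα : ∀ y, 0 ≤ α y) (hφ : ∀ y, star (φ y) ⬝ᵥ φ y = 1)
    (hcomplete : ∑ y, (α y : ℂ) • vecMulVec (φ y) (star (φ y)) = 1) (y₀ : Y) :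
    α y₀ ≤ 1 := by
  have h := congrArg (fun B => star (φ y₀) ⬝ᵥ B *ᵥ φ y₀) hcomplete
  simp only [sum_mulVec, dotProduct_sum, smul_mulVec, dotProduct_smul,
    dotProduct_vecMulVec_mulVec, one_mulVec, hφ] at h
  have hsum : ∑ y, α y * Complex.normSq (star (φ y) ⬝ᵥ φ y₀) = 1 := by
    have hterm : ∀ y, star (φ y₀) ⬝ᵥ φ y * (star (φ y) ⬝ᵥ φ y₀) =
        Complex.normSq (star (φ y) ⬝ᵥ φ y₀) := fun y => by
      rw [star_dotProduct, Complex.normSq_eq_conj_mul_self, Complex.star_def]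
    simp only [hterm, smul_eq_mul, ← Complex.ofReal_mul] at h
    exact_mod_cast h
  calc α y₀ = α y₀ * Complex.normSq (star (φ y₀) ⬝ᵥ φ y₀) := by simp [hφ]
    _ ≤ 1 := hsum ▸ Finset.single_le_sum
        (f := fun y => α y * Complex.normSq (star (φ y) ⬝ᵥ φ y₀))
        (fun y _ => mul_nonneg (hα y) (Complex.normSq_nonneg _)) (Finset.mem_univ y₀)

end RankOneResolution

namespace Real

theorem sum_mul_logb_le_logb_of_le {ι : Type*} (s : Finset ι) {b c : ℝ} (hb : 1 < b)
    {p : ι → ℝ} (hp0 : ∀ i ∈ s, 0 ≤ p i) (hp1 : ∑ i ∈ s, p i = 1)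
    (hpc : ∀ i ∈ s, p i ≤ c) :
    ∑ i ∈ s, p i * logb b (p i) ≤ logb b c :=
  calc ∑ i ∈ s, p i * logb b (p i) ≤ ∑ i ∈ s, p i * logb b c := by
        refine Finset.sum_le_sum fun i hi => ?_
        rcases (hp0 i hi).eq_or_lt with hpi | hpi
        · simp [← hpi]
        · exact mul_le_mul_of_nonneg_left (logb_le_logb_of_le hb hpi (hpc i hi)) hpi.le
    _ = logb b c := by rw [← Finset.sum_mul, hp1, one_mul]

theorem logb_two_one_add_le {ε : ℝ} (hε : 0 ≤ ε) : logb 2 (1 + ε) ≤ 2 * ε := by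
  have hlog : log (1 + ε) ≤ ε := by
    linarith [log_le_sub_one_of_pos (x := 1 + ε) (by linarith)]
  rw [logb, div_le_iff₀ (log_pos one_lt_two)]
  nlinarith [log_two_gt_d9]

end Real

theorem povm_outcome_entropy_bound_general {Y : Type*} [Fintype Y] (n : ℕ) (ε : ℝ)
    (hε0 : 0 ≤ ε)
    (ρ : Matrix (Fin (2 ^ n)) (Fin (2 ^ n)) ℂ) (hρ : ρ.PosSemidef) (htr : ρ.trace = 1)
    (hle : ((((1 + ε) * ((2 : ℝ) ^ n)⁻¹ : ℝ) : ℂ) •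
        (1 : Matrix (Fin (2 ^ n)) (Fin (2 ^ n)) ℂ) - ρ).PosSemidef)
    (α : Y → ℝ) (hα : ∀ y, 0 ≤ α y)
    (φ : Y → Fin (2 ^ n) → ℂ) (hφ : ∀ y, star (φ y) ⬝ᵥ φ y = 1)
    (hcomplete : ∑ y, (α y : ℂ) • vecMulVec (φ y) (star (φ y)) =
      (1 : Matrix (Fin (2 ^ n)) (Fin (2 ^ n)) ℂ)) :
    ∑ y, α y = 2 ^ n ∧
      (∀ y, 0 ≤ α y * (star (φ y) ⬝ᵥ ρ *ᵥ (φ y)).re) ∧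
      ∑ y, α y * (star (φ y) ⬝ᵥ ρ *ᵥ (φ y)).re = 1 ∧
      n - Real.logb 2 (1 + ε) ≤
        -∑ y, (α y * (star (φ y) ⬝ᵥ ρ *ᵥ (φ y)).re) *
            Real.logb 2 (α y * (star (φ y) ⬝ᵥ ρ *ᵥ (φ y)).re) ∧
      (n : ℝ) - 2 * ε ≤ n - Real.logb 2 (1 + ε) := by
  set p : Y → ℝ := fun y => α y * (star (φ y) ⬝ᵥ ρ *ᵥ (φ y)).re
  have hp0 : ∀ y, 0 ≤ p y := fun y => mul_nonneg (hα y) (hρ.re_dotProduct_mulVec_nonneg _)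
  have hp1 : ∑ y, p y = 1 := by
    simpa [p, htr] using
      congrArg Complex.re (sum_weight_mul_dotProduct_mulVec_eq_trace ρ hcomplete)
  have hpc : ∀ y, p y ≤ (1 + ε) * ((2 : ℝ) ^ n)⁻¹ := fun y =>
    (mul_le_of_le_one_left (hρ.re_dotProduct_mulVec_nonneg _)
      (weight_le_one hα hφ hcomplete y)).trans (hle.re_dotProduct_mulVec_le (hφ y))
  have hlogb : Real.logb 2 ((1 + ε) * ((2 : ℝ) ^ n)⁻¹) = Real.logb 2 (1 + ε) - n := by
    rw [Real.logb_mul (by positivity) (by positivity), Real.logb_inv, Real.logb_pow,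
      Real.logb_self_eq_one one_lt_two, mul_one, sub_eq_add_neg]
  refine ⟨by simpa using sum_weight_eq_card hφ hcomplete, hp0, hp1, ?_, ?_⟩
  · linarith [Real.sum_mul_logb_le_logb_of_le Finset.univ one_lt_two (fun y _ => hp0 y) hp1
      (fun y _ => hpc y)]
  · linarith [Real.logb_two_one_add_le hε0]

/-- For a density matrix `ρ` on `ℂ^(2^n)` with `ρ ≤ (1+ε)2⁻ⁿI` (`0 ≤ ε ≤ 1`) and a
rank-one POVM `{α_y |φ_y⟩⟨φ_y|}` resolving the identity, one has `∑_y α_y = 2ⁿ`, the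
outcome distribution `p(y) = α_y⟨φ_y|ρ|φ_y⟩` is a probability distribution, and its
Shannon entropy satisfies `H(p) ≥ n − log₂(1+ε) ≥ n − 2ε`. -/
theorem povm_outcome_entropy_bound {Y : Type*} [Fintype Y] (n : ℕ) (ε : ℝ)
    (hε0 : 0 ≤ ε) (hε1 : ε ≤ 1)
    (ρ : Matrix (Fin (2 ^ n)) (Fin (2 ^ n)) ℂ) (hρ : ρ.PosSemidef) (htr : ρ.trace = 1)
    (hle : ((((1 + ε) * ((2 : ℝ) ^ n)⁻¹ : ℝ) : ℂ) •
        (1 : Matrix (Fin (2 ^ n)) (Fin (2 ^ n)) ℂ) - ρ).PosSemidef)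
    (α : Y → ℝ) (hα : ∀ y, 0 ≤ α y)
    (φ : Y → Fin (2 ^ n) → ℂ) (hφ : ∀ y, star (φ y) ⬝ᵥ φ y = 1)
    (hcomplete : ∑ y, (α y : ℂ) • vecMulVec (φ y) (star (φ y)) =
      (1 : Matrix (Fin (2 ^ n)) (Fin (2 ^ n)) ℂ)) :
    ∑ y, α y = 2 ^ n ∧
      (∀ y, 0 ≤ α y * (star (φ y) ⬝ᵥ ρ *ᵥ (φ y)).re) ∧
      ∑ y, α y * (star (φ y) ⬝ᵥ ρ *ᵥ (φ y)).re = 1 ∧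
      n - Real.logb 2 (1 + ε) ≤
        -∑ y, (α y * (star (φ y) ⬝ᵥ ρ *ᵥ (φ y)).re) *
            Real.logb 2 (α y * (star (φ y) ⬝ᵥ ρ *ᵥ (φ y)).re) ∧
      (n : ℝ) - 2 * ε ≤ n - Real.logb 2 (1 + ε) :=
  povm_outcome_entropy_bound_general n ε hε0 ρ hρ htr hle α hα φ hφ hcomplete
end
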